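/- Let (λ(t), x(t), v(t)) be a continuously differentiable solution on [0,∞) of the accelerated primal-dual flow: θ(t)λ'(t) = A v(t) − b, x'(t) = v(t) − x(t), γ(t)v'(t) = μ_β(x(t) − v(t)) − ∇_x L_β(x(t), λ(t)), where θ(t) = θ₀ e^{−t} and γ(t) = μ_β + (γ₀ − μ_β)e^{−t} with θ₀, γ₀ > 0. Define E(t) = L_β(x(t), λ*) − L_β(x*, λ(t)) + (γ(t)/2)‖v(t) − x*‖² + (θ(t)/2)‖λ(t) − λ*‖², and R₀ = √(2θ₀E(0)) + θ₀‖λ(0) − λ*‖ + ‖Ax(0) − b‖. Then for all t ≥ 0, ‖Ax(t) − b‖ ≤ e^{−t} R₀ and |f(x(t)) − f(x*)| ≤ e^{−t}(E(0) + R₀‖λ*‖). -/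

import Mathlib

/-!
Along the flow the Lyapunov function `E` satisfies `E' + E ≤ 0`: once the three equations are
substituted, the dual terms cancel through the adjoint and `E' + E` is the strong-convexity gap of
`f` between `x` and `x*`, plus `(β/2)(σ_min(A)²‖x - x*‖² - ‖A x - b‖²) - (μ_β/2)‖x - v‖²`.
Hence `E(t) ≤ e^{-t} E(0)`, and `E ≥ (θ/2)‖λ - λ*‖²` bounds the dual variable. Because `θ' = -θ`
and `x' = v - x`, the quantity `e^t (A x - b) - θ₀ λ` is conserved, which turns the dual bound into
the feasibility bound. Finally `0 ≤ f(x) - f(x*) + ⟨λ*, A x - b⟩ ≤ E` by convexity at the saddle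
point, and the inner product is controlled by the feasibility bound.
-/

open scoped RealInnerProductSpace InnerProduct
open Set Real

/-- The smallest singular value of a linear map between Euclidean spaces. -/
noncomputable def sigmaMin {n m : ℕ}
    (A : EuclideanSpace ℝ (Fin n) →L[ℝ] EuclideanSpace ℝ (Fin m)) : ℝ :=
  sInf {c : ℝ | ∃ x : EuclideanSpace ℝ (Fin n), ‖x‖ = 1 ∧ ‖A x‖ = c}

section SigmaMin

variable {n m : ℕ} (A : EuclideanSpace ℝ (Fin n) →L[ℝ] EuclideanSpace ℝ (Fin m))

theorem sigmaMin_nonneg : 0 ≤ sigmaMin A :=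
  Real.sInf_nonneg fun _ ⟨_, _, hc⟩ => hc ▸ norm_nonneg _

theorem sigmaMin_mul_norm_le (z : EuclideanSpace ℝ (Fin n)) : sigmaMin A * ‖z‖ ≤ ‖A z‖ := by
  rcases eq_or_ne z 0 with rfl | hz
  · simp
  have hz' : 0 < ‖z‖ := norm_pos_iff.mpr hz
  have hunit : ‖‖z‖⁻¹ • z‖ = 1 := by rw [norm_smul, norm_inv, norm_norm, inv_mul_cancel₀ hz'.ne']
  have hle : sigmaMin A ≤ ‖z‖⁻¹ * ‖A z‖ := by
    refine csInf_le ⟨0, ?_⟩ ⟨_, hunit, ?_⟩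
    · rintro _ ⟨y, -, rfl⟩
      exact norm_nonneg _
    · rw [map_smul, norm_smul, norm_inv, norm_norm]
  rwa [le_inv_mul_iff₀ hz', mul_comm] at hle

theorem sigmaMin_sq_mul_norm_sq_le (z : EuclideanSpace ℝ (Fin n)) :
    sigmaMin A ^ 2 * ‖z‖ ^ 2 ≤ ‖A z‖ ^ 2 := by
  rw [← mul_pow]
  exact pow_le_pow_left₀ (mul_nonneg (sigmaMin_nonneg A) (norm_nonneg z))
    (sigmaMin_mul_norm_le A z) 2

end SigmaMin

theorem le_exp_neg_mul_of_hasDerivAt_le_neg {E : ℝ → ℝ}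
    (hE : ∀ t, 0 ≤ t → ∃ d, HasDerivAt E d t ∧ d ≤ -E t) {t : ℝ} (ht : 0 ≤ t) :
    E t ≤ exp (-t) * E 0 := by
  have hderiv : ∀ s, 0 ≤ s → HasDerivAt E (deriv E s) s := fun s hs =>
    let ⟨_, hd, _⟩ := hE s hs; hd.differentiableAt.hasDerivAt
  have hgronwall := le_gronwallBound_of_liminf_deriv_right_le (f := E) (f' := deriv E)
    (δ := E 0) (K := -1) (ε := 0) (b := t)
    (fun s hs => (hderiv s hs.1).continuousAt.continuousWithinAt)
    (fun s hs _ hr => (hderiv s hs.1).hasDerivWithinAt.liminf_right_slope_le hr) le_rfl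
    (fun s hs => by
      obtain ⟨d, hd, hle⟩ := hE s hs.1
      rw [hd.deriv]
      linarith) t ⟨ht, le_rfl⟩
  rwa [gronwallBound_ε0, sub_zero, neg_one_mul, mul_comm] at hgronwall

theorem mul_le_sqrt_of_half_mul_sq_le {a r e c : ℝ} (ha : 0 ≤ a) (hc : 0 < c)
    (h : a * c / 2 * r ^ 2 ≤ c * e) : a * r ≤ √(2 * a * e) := by
  have h' : a / 2 * r ^ 2 ≤ e := le_of_mul_le_mul_left (by linarith) hc
  exact Real.le_sqrt_of_sq_le (by nlinarith)

theorem abs_le_of_nonneg_add_le {p q e r : ℝ} (h₀ : 0 ≤ p + q) (he : p + q ≤ e) (hr : |q| ≤ r) :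
    |p| ≤ e + r := by
  rw [abs_le] at hr ⊢
  constructor <;> linarith

theorem hasDerivAt_mul_exp_neg (c t : ℝ) :
    HasDerivAt (fun s => c * exp (-s)) (-(c * exp (-t))) t := by
  simpa using ((hasDerivAt_neg t).exp).const_mul c

theorem hasDerivAt_add_mul_exp_neg (c d t : ℝ) :
    HasDerivAt (fun s => c + d * exp (-s)) (c - (c + d * exp (-t))) t :=
  ((hasDerivAt_mul_exp_neg d t).const_add c).congr_deriv (by ring)

section APDFlow

variable {E F : Type*} [NormedAddCommGroup E] [InnerProductSpace ℝ E]
  [NormedAddCommGroup F] [InnerProductSpace ℝ F]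
  {f : E → ℝ} {A : E →L[ℝ] F} {b : F} {β : ℝ}

variable (f A b β) in
noncomputable def augLagrangian (z : E) (w : F) : ℝ :=
  f z + β / 2 * ‖A z - b‖ ^ 2 + ⟪w, A z - b⟫

theorem augLagrangian_of_apply_eq {z : E} (w : F) (hz : A z = b) :
    augLagrangian f A b β z w = f z := by
  simp [augLagrangian, hz]

theorem HasDerivAt.augLagrangian [CompleteSpace E] [CompleteSpace F] {x : ℝ → E} {x' g : E}
    {t : ℝ} (w : F) (hf : HasGradientAt f g (x t)) (hx : HasDerivAt x x' t) :
    HasDerivAt (fun s => augLagrangian f A b β (x s) w)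
      ⟪g + β • (A†) (A (x t) - b) + (A†) w, x'⟫ t := by
  have hres : HasDerivAt (fun s => A (x s) - b) (A x') t :=
    (A.hasFDerivAt.comp_hasDerivAt t hx).sub_const b
  refine (((hf.hasFDerivAt.comp_hasDerivAt t hx).add (hres.norm_sq.const_mul (β / 2))).add
    ((hasDerivAt_const t w).inner ℝ hres)).congr_deriv ?_
  simp only [inner_add_left, real_inner_smul_left, ContinuousLinearMap.adjoint_inner_left,
    inner_zero_left, InnerProductSpace.toDual_apply_apply]
  ring

theorem HasDerivAt.half_mul_norm_sub_sq {c : ℝ → ℝ} {u : ℝ → E} {c' : ℝ} {u' : E} {t : ℝ}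
    (u₀ : E) (hc : HasDerivAt c c' t) (hu : HasDerivAt u u' t) :
    HasDerivAt (fun s => c s / 2 * ‖u s - u₀‖ ^ 2)
      (c' / 2 * ‖u t - u₀‖ ^ 2 + ⟪c t • u', u t - u₀⟫) t := by
  refine ((hc.div_const 2).mul (hu.sub_const u₀).norm_sq).congr_deriv ?_
  rw [real_inner_smul_left, real_inner_comm]
  ring

theorem lagrangian_le_of_kkt [CompleteSpace E] [CompleteSpace F] {g xs : E} {ls : F}
    (hconv : ∀ y, f xs + ⟪g, y - xs⟫ ≤ f y) (hkkt : g + (A†) ls = 0) (hb : A xs = b) (z : E) :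
    f xs ≤ f z + ⟪ls, A z - b⟫ := by
  have hg : ⟪g, z - xs⟫ = -⟪ls, A z - b⟫ := by
    rw [eq_neg_of_add_eq_zero_left hkkt, inner_neg_left, ContinuousLinearMap.adjoint_inner_left,
      map_sub, hb]
  linarith [hconv z]

variable (f A b β) in
noncomputable def apdLyapunov (xs : E) (ls : F) (γ θ : ℝ) (z u : E) (w : F) : ℝ :=
  augLagrangian f A b β z ls - augLagrangian f A b β xs w
    + γ / 2 * ‖u - xs‖ ^ 2 + θ / 2 * ‖w - ls‖ ^ 2

theorem apdLyapunov_eq {xs : E} (ls : F) (γ θ : ℝ) (z u : E) (w : F) (hb : A xs = b) :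
    apdLyapunov f A b β xs ls γ θ z u w = f z - f xs + β / 2 * ‖A z - b‖ ^ 2 + ⟪ls, A z - b⟫
      + γ / 2 * ‖u - xs‖ ^ 2 + θ / 2 * ‖w - ls‖ ^ 2 := by
  rw [apdLyapunov, augLagrangian_of_apply_eq w hb, augLagrangian]
  ring

theorem apdLyapunov_deriv_add_eq [CompleteSpace E] [CompleteSpace F] (μβ γ θ : ℝ)
    {G z u xs : E} {w ls : F} (hb : A xs = b) :
    ⟪G + β • (A†) (A z - b) + (A†) ls, u - z⟫ + (μβ - γ) / 2 * ‖u - xs‖ ^ 2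
      + ⟪μβ • (z - u) - (G + β • (A†) (A z - b) + (A†) w), u - xs⟫
      + -θ / 2 * ‖w - ls‖ ^ 2 + ⟪A u - b, w - ls⟫ + apdLyapunov f A b β xs ls γ θ z u w
    = f z + ⟪G, xs - z⟫ - f xs - β / 2 * ‖A z - b‖ ^ 2
      + μβ / 2 * (‖z - xs‖ ^ 2 - ‖z - u‖ ^ 2) := by
  rw [apdLyapunov_eq ls γ θ z u w hb]
  simp only [← real_inner_self_eq_norm_sq, inner_sub_left, inner_sub_right,
    inner_add_left, real_inner_smul_left, map_sub, ContinuousLinearMap.adjoint_inner_left, hb]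
  simp only [real_inner_comm]
  ring

theorem hasDerivAt_apdLyapunov [CompleteSpace E] [CompleteSpace F] {xs : E} (ls : F)
    {γ θ : ℝ → ℝ} {x v : ℝ → E} {w : ℝ → F} {γ' θ' : ℝ} {g x' v' : E} {w' : F} {t : ℝ}
    (hb : A xs = b) (hf : HasGradientAt f g (x t)) (hγ : HasDerivAt γ γ' t)
    (hθ : HasDerivAt θ θ' t) (hx : HasDerivAt x x' t) (hv : HasDerivAt v v' t)
    (hw : HasDerivAt w w' t) :
    HasDerivAt (fun s => apdLyapunov f A b β xs ls (γ s) (θ s) (x s) (v s) (w s))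
      (⟪g + β • (A†) (A (x t) - b) + (A†) ls, x'⟫ + γ' / 2 * ‖v t - xs‖ ^ 2
        + ⟪γ t • v', v t - xs⟫ + θ' / 2 * ‖w t - ls‖ ^ 2 + ⟪θ t • w', w t - ls⟫) t := by
  have hprimal : HasDerivAt (fun s => augLagrangian f A b β (x s) ls) _ t := hx.augLagrangian ls hf
  have hdual : HasDerivAt (fun s => augLagrangian f A b β xs (w s)) 0 t := by
    simpa only [augLagrangian_of_apply_eq _ hb] using hasDerivAt_const t (f xs)
  have hsum := ((hprimal.sub hdual).add (hγ.half_mul_norm_sub_sq xs hv)).add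
    (hθ.half_mul_norm_sub_sq ls hw)
  refine hsum.congr_deriv ?_
  ring

theorem lagrangian_gap_le_apdLyapunov {xs : E} (ls : F) {γ θ : ℝ} (z u : E) (w : F)
    (hβ : 0 ≤ β) (hγ : 0 ≤ γ) (hθ : 0 ≤ θ) (hb : A xs = b) :
    f z - f xs + ⟪ls, A z - b⟫ ≤ apdLyapunov f A b β xs ls γ θ z u w := by
  rw [apdLyapunov_eq ls γ θ z u w hb]
  have : 0 ≤ β / 2 * ‖A z - b‖ ^ 2 + γ / 2 * ‖u - xs‖ ^ 2 + θ / 2 * ‖w - ls‖ ^ 2 := by positivity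
  linarith

theorem half_mul_norm_sq_le_apdLyapunov {xs : E} (ls : F) {γ θ : ℝ} (z u : E) (w : F)
    (hsaddle : f xs ≤ f z + ⟪ls, A z - b⟫) (hβ : 0 ≤ β) (hγ : 0 ≤ γ) (hb : A xs = b) :
    θ / 2 * ‖w - ls‖ ^ 2 ≤ apdLyapunov f A b β xs ls γ θ z u w := by
  rw [apdLyapunov_eq ls γ θ z u w hb]
  have : 0 ≤ β / 2 * ‖A z - b‖ ^ 2 + γ / 2 * ‖u - xs‖ ^ 2 := by positivity
  linarith

structure IsAPDFlow [CompleteSpace E] [CompleteSpace F] (gradf : E → E) (A : E →L[ℝ] F) (b : F)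
    (β μβ : ℝ) (θ γ : ℝ → ℝ) (lam : ℝ → F) (x v : ℝ → E) : Prop where
  dual : ∀ t, 0 ≤ t → ∃ lam', HasDerivAt lam lam' t ∧ θ t • lam' = A (v t) - b
  primal : ∀ t, 0 ≤ t → HasDerivAt x (v t - x t) t
  velocity : ∀ t, 0 ≤ t → ∃ v', HasDerivAt v v' t ∧
    γ t • v' = μβ • (x t - v t) - (gradf (x t) + β • (A†) (A (x t) - b) + (A†) (lam t))

namespace IsAPDFlow

variable [CompleteSpace E] [CompleteSpace F] {gradf : E → E} {μβ : ℝ} {θ γ : ℝ → ℝ}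
  {lam : ℝ → F} {x v : ℝ → E}

theorem apdLyapunov_le_exp_neg_mul (hflow : IsAPDFlow gradf A b β μβ θ γ lam x v)
    {μ κ : ℝ} {xs : E} {ls : F} (hgrad : ∀ z, HasGradientAt f (gradf z) z)
    (hconv : ∀ z, f z + ⟪gradf z, xs - z⟫ + μ / 2 * ‖xs - z‖ ^ 2 ≤ f xs)
    (hA : ∀ z, κ * ‖z‖ ^ 2 ≤ ‖A z‖ ^ 2) (hμβ : μβ = μ + β * κ) (hβ : 0 ≤ β) (hμβ₀ : 0 ≤ μβ)
    (hb : A xs = b) (hθ : ∀ t, HasDerivAt θ (-θ t) t) (hγ : ∀ t, HasDerivAt γ (μβ - γ t) t)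
    {t : ℝ} (ht : 0 ≤ t) :
    apdLyapunov f A b β xs ls (γ t) (θ t) (x t) (v t) (lam t)
      ≤ exp (-t) * apdLyapunov f A b β xs ls (γ 0) (θ 0) (x 0) (v 0) (lam 0) := by
  refine le_exp_neg_mul_of_hasDerivAt_le_neg
    (E := fun t => apdLyapunov f A b β xs ls (γ t) (θ t) (x t) (v t) (lam t)) (fun τ hτ => ?_) ht
  obtain ⟨lam', hlam', hdual⟩ := hflow.dual τ hτ
  obtain ⟨v', hv', hvel⟩ := hflow.velocity τ hτ
  refine ⟨_, hasDerivAt_apdLyapunov ls hb (hgrad (x τ)) (hγ τ) (hθ τ) (hflow.primal τ hτ) hv' hlam',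
    ?_⟩
  have hid := apdLyapunov_deriv_add_eq (f := f) (β := β) μβ (γ τ) (θ τ) (G := gradf (x τ))
    (z := x τ) (u := v τ) (w := lam τ) (ls := ls) hb
  have hres : κ * ‖x τ - xs‖ ^ 2 ≤ ‖A (x τ) - b‖ ^ 2 := by
    simpa only [map_sub, hb] using hA (x τ - xs)
  have hpen := mul_le_mul_of_nonneg_left hres hβ
  have hdamp : 0 ≤ μβ * ‖x τ - v τ‖ ^ 2 := by positivity
  have hgap := hconv (x τ)
  rw [norm_sub_rev] at hgap
  rw [hvel, hdual]
  subst hμβ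
  linear_combination hid + hgap + hpen / 2 + hdamp / 2

theorem exp_smul_residual_sub_eq (hflow : IsAPDFlow gradf A b β μβ θ γ lam x v) {θ₀ : ℝ}
    (hθ : ∀ t, θ t = θ₀ * exp (-t)) {t : ℝ} (ht : 0 ≤ t) :
    exp t • (A (x t) - b) - θ₀ • lam t = (A (x 0) - b) - θ₀ • lam 0 := by
  have hderiv : ∀ s, 0 ≤ s → HasDerivAt (fun s => exp s • (A (x s) - b) - θ₀ • lam s) 0 s := by
    intro s hs
    obtain ⟨lam', hlam', hdual⟩ := hflow.dual s hs
    have hres : HasDerivAt (fun s => A (x s) - b) (A (v s - x s)) s :=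
      (A.hasFDerivAt.comp_hasDerivAt s (hflow.primal s hs)).sub_const b
    have hθ₀ : θ₀ = exp s * θ s := by
      rw [hθ, ← mul_assoc, mul_comm (exp s), mul_assoc, ← exp_add, add_neg_cancel, exp_zero,
        mul_one]
    refine (((hasDerivAt_exp s).smul hres).sub (hlam'.const_smul θ₀)).congr_deriv ?_
    rw [hθ₀, mul_smul, hdual, map_sub]
    module
  have hcont : ContinuousOn (fun s => exp s • (A (x s) - b) - θ₀ • lam s) (Icc 0 t) :=
    fun s hs => (hderiv s hs.1).continuousAt.continuousWithinAt
  simpa using constant_of_has_deriv_right_zero hcont (fun s hs => (hderiv s hs.1).hasDerivWithinAt)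
    t ⟨ht, le_rfl⟩

theorem norm_residual_le (hflow : IsAPDFlow gradf A b β μβ θ γ lam x v) {θ₀ C : ℝ} (ls : F)
    (hθ : ∀ t, θ t = θ₀ * exp (-t)) (hθ₀ : 0 ≤ θ₀) {t : ℝ} (ht : 0 ≤ t)
    (hdual : θ₀ * ‖lam t - ls‖ ≤ C) :
    ‖A (x t) - b‖ ≤ exp (-t) * (C + θ₀ * ‖lam 0 - ls‖ + ‖A (x 0) - b‖) := by
  have hcons := hflow.exp_smul_residual_sub_eq hθ ht
  have hsplit : exp t • (A (x t) - b)
      = θ₀ • (lam t - ls) - θ₀ • (lam 0 - ls) + (A (x 0) - b) := by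
    rw [sub_eq_iff_eq_add] at hcons
    rw [hcons]
    module
  have hnorm : exp t * ‖A (x t) - b‖ ≤ θ₀ * ‖lam t - ls‖ + θ₀ * ‖lam 0 - ls‖ + ‖A (x 0) - b‖ := by
    calc exp t * ‖A (x t) - b‖ = ‖exp t • (A (x t) - b)‖ := by
          rw [norm_smul, norm_of_nonneg (exp_pos t).le]
      _ ≤ ‖θ₀ • (lam t - ls)‖ + ‖θ₀ • (lam 0 - ls)‖ + ‖A (x 0) - b‖ := by
          rw [hsplit]
          exact (norm_add_le _ _).trans (by gcongr; exact norm_sub_le _ _)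
      _ = θ₀ * ‖lam t - ls‖ + θ₀ * ‖lam 0 - ls‖ + ‖A (x 0) - b‖ := by
          rw [norm_smul, norm_smul, norm_of_nonneg hθ₀]
  rw [exp_neg, ← div_eq_inv_mul, le_div_iff₀ (exp_pos t), mul_comm]
  linarith

end IsAPDFlow

end APDFlow

theorem apd_flow_feasibility_objective_decay_general {n m : ℕ}
    (f : EuclideanSpace ℝ (Fin n) → ℝ)
    (gradf : EuclideanSpace ℝ (Fin n) → EuclideanSpace ℝ (Fin n))
    (A : EuclideanSpace ℝ (Fin n) →L[ℝ] EuclideanSpace ℝ (Fin m))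
    (b : EuclideanSpace ℝ (Fin m))
    (μ L β θ₀ γ₀ μβ : ℝ)
    (hμ : 0 ≤ μ) (hβ : 0 ≤ β) (hθ₀ : 0 < θ₀) (hγ₀ : 0 < γ₀)
    (hμβ : μβ = μ + β * sigmaMin A ^ 2)
    (hgrad : ∀ x, HasGradientAt f (gradf x) x)
    (hconv : ∀ x y, f x + ⟪gradf x, y - x⟫ + μ / 2 * ‖y - x‖ ^ 2 ≤ f y)
    (xs : EuclideanSpace ℝ (Fin n)) (ls : EuclideanSpace ℝ (Fin m))
    (hKKT1 : A xs = b)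
    (hKKT2 : gradf xs + (ContinuousLinearMap.adjoint A) ls = 0)
    (lam : ℝ → EuclideanSpace ℝ (Fin m))
    (x v : ℝ → EuclideanSpace ℝ (Fin n))
    (lam' : ℝ → EuclideanSpace ℝ (Fin m))
    (x' v' : ℝ → EuclideanSpace ℝ (Fin n))
    (hlamd : ∀ t, 0 ≤ t → HasDerivAt lam (lam' t) t)
    (hxd : ∀ t, 0 ≤ t → HasDerivAt x (x' t) t)
    (hvd : ∀ t, 0 ≤ t → HasDerivAt v (v' t) t)
    (θ γ : ℝ → ℝ)
    (hθ : ∀ t, θ t = θ₀ * Real.exp (-t))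
    (hγ : ∀ t, γ t = μβ + (γ₀ - μβ) * Real.exp (-t))
    (hode1 : ∀ t, 0 ≤ t → θ t • lam' t = A (v t) - b)
    (hode2 : ∀ t, 0 ≤ t → x' t = v t - x t)
    (hode3 : ∀ t, 0 ≤ t → γ t • v' t =
      μβ • (x t - v t) -
        (gradf (x t) + β • (ContinuousLinearMap.adjoint A) (A (x t) - b)
          + (ContinuousLinearMap.adjoint A) (lam t)))
    (Lβ : EuclideanSpace ℝ (Fin n) → EuclideanSpace ℝ (Fin m) → ℝ)
    (hLβ : ∀ z w, Lβ z w = f z + β / 2 * ‖A z - b‖ ^ 2 + ⟪w, A z - b⟫)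
    (Efun : ℝ → ℝ)
    (hE : ∀ t, Efun t = Lβ (x t) ls - Lβ xs (lam t)
      + γ t / 2 * ‖v t - xs‖ ^ 2 + θ t / 2 * ‖lam t - ls‖ ^ 2)
    (R₀ : ℝ)
    (hR₀ : R₀ = Real.sqrt (2 * θ₀ * Efun 0) + θ₀ * ‖lam 0 - ls‖ + ‖A (x 0) - b‖) :
    ∀ t, 0 ≤ t →
      ‖A (x t) - b‖ ≤ Real.exp (-t) * R₀ ∧
      |f (x t) - f xs| ≤ Real.exp (-t) * (Efun 0 + R₀ * ‖ls‖) := by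
  have hμβ₀ : 0 ≤ μβ := hμβ ▸ by positivity
  have hflow : IsAPDFlow gradf A b β μβ θ γ lam x v :=
    ⟨fun t ht => ⟨lam' t, hlamd t ht, hode1 t ht⟩, fun t ht => hode2 t ht ▸ hxd t ht,
      fun t ht => ⟨v' t, hvd t ht, hode3 t ht⟩⟩
  have hEfun : ∀ t, Efun t = apdLyapunov f A b β xs ls (γ t) (θ t) (x t) (v t) (lam t) :=
    fun t => by simp only [hE, hLβ, apdLyapunov, augLagrangian]
  have hθd : ∀ t, HasDerivAt θ (-θ t) t := fun t => funext hθ ▸ hasDerivAt_mul_exp_neg θ₀ t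
  have hγd : ∀ t, HasDerivAt γ (μβ - γ t) t := fun t =>
    funext hγ ▸ hasDerivAt_add_mul_exp_neg μβ (γ₀ - μβ) t
  have hγnn : ∀ t, 0 ≤ t → 0 ≤ γ t := fun t ht => by
    nlinarith [hγ t, exp_pos (-t), exp_le_one_iff.mpr (neg_nonpos.mpr ht)]
  have hsaddle : ∀ z, f xs ≤ f z + ⟪ls, A z - b⟫ :=
    lagrangian_le_of_kkt (fun y => by nlinarith [hconv xs y, sq_nonneg ‖y - xs‖]) hKKT2 hKKT1
  have hdecay : ∀ t, 0 ≤ t → Efun t ≤ exp (-t) * Efun 0 := fun t ht => by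
    simpa only [hEfun] using hflow.apdLyapunov_le_exp_neg_mul hgrad (fun z => hconv z xs)
      (sigmaMin_sq_mul_norm_sq_le A) hμβ hβ hμβ₀ hKKT1 hθd hγd ht
  have hgap : ∀ t, 0 ≤ t → f (x t) - f xs + ⟪ls, A (x t) - b⟫ ≤ Efun t := fun t ht =>
    hEfun t ▸ lagrangian_gap_le_apdLyapunov ls _ _ _ hβ (hγnn t ht) (hθ t ▸ by positivity) hKKT1
  have hdual : ∀ t, 0 ≤ t → θ₀ * ‖lam t - ls‖ ≤ √(2 * θ₀ * Efun 0) := by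
    intro t ht
    have hlower := half_mul_norm_sq_le_apdLyapunov (θ := θ t) ls (x t) (v t) (lam t)
      (hsaddle (x t)) hβ (hγnn t ht) hKKT1
    rw [← hEfun, hθ] at hlower
    exact mul_le_sqrt_of_half_mul_sq_le hθ₀.le (exp_pos (-t)) (hlower.trans (hdecay t ht))
  intro t ht
  have hres : ‖A (x t) - b‖ ≤ exp (-t) * R₀ :=
    hR₀ ▸ hflow.norm_residual_le ls hθ hθ₀.le ht (hdual t ht)
  have hinner : |⟪ls, A (x t) - b⟫| ≤ ‖ls‖ * (exp (-t) * R₀) :=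
    (abs_real_inner_le_norm _ _).trans (mul_le_mul_of_nonneg_left hres (norm_nonneg _))
  refine ⟨hres, ?_⟩
  calc |f (x t) - f xs| ≤ exp (-t) * Efun 0 + ‖ls‖ * (exp (-t) * R₀) :=
        abs_le_of_nonneg_add_le (by linarith [hsaddle (x t)]) ((hgap t ht).trans (hdecay t ht))
          hinner
    _ = exp (-t) * (Efun 0 + R₀ * ‖ls‖) := by ring

/-- Lemma 2.1 (i): exponential decay inequality for the Lyapunov function of the
accelerated primal-dual flow. -/
theorem apd_flow_feasibility_objective_decay {n m : ℕ}
    (f : EuclideanSpace ℝ (Fin n) → ℝ)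
    (gradf : EuclideanSpace ℝ (Fin n) → EuclideanSpace ℝ (Fin n))
    (A : EuclideanSpace ℝ (Fin n) →L[ℝ] EuclideanSpace ℝ (Fin m))
    (b : EuclideanSpace ℝ (Fin m))
    (μ L β θ₀ γ₀ μβ : ℝ)
    (hμ : 0 ≤ μ) (hμL : μ ≤ L) (hβ : 0 ≤ β) (hθ₀ : 0 < θ₀) (hγ₀ : 0 < γ₀)
    (hμβ : μβ = μ + β * sigmaMin A ^ 2)
    (hgrad : ∀ x, HasGradientAt f (gradf x) x)
    (hconv : ∀ x y, f x + ⟪gradf x, y - x⟫ + μ / 2 * ‖y - x‖ ^ 2 ≤ f y)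
    (hlip : ∀ x y, ⟪gradf x - gradf y, x - y⟫ ≤ L * ‖x - y‖ ^ 2)
    (xs : EuclideanSpace ℝ (Fin n)) (ls : EuclideanSpace ℝ (Fin m))
    (hKKT1 : A xs = b)
    (hKKT2 : gradf xs + (ContinuousLinearMap.adjoint A) ls = 0)
    (lam : ℝ → EuclideanSpace ℝ (Fin m))
    (x v : ℝ → EuclideanSpace ℝ (Fin n))
    (lam' : ℝ → EuclideanSpace ℝ (Fin m))
    (x' v' : ℝ → EuclideanSpace ℝ (Fin n))
    (hlamd : ∀ t, 0 ≤ t → HasDerivAt lam (lam' t) t)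
    (hxd : ∀ t, 0 ≤ t → HasDerivAt x (x' t) t)
    (hvd : ∀ t, 0 ≤ t → HasDerivAt v (v' t) t)
    (hlamc : Continuous lam') (hxc : Continuous x') (hvc : Continuous v')
    (θ γ : ℝ → ℝ)
    (hθ : ∀ t, θ t = θ₀ * Real.exp (-t))
    (hγ : ∀ t, γ t = μβ + (γ₀ - μβ) * Real.exp (-t))
    (hode1 : ∀ t, 0 ≤ t → θ t • lam' t = A (v t) - b)
    (hode2 : ∀ t, 0 ≤ t → x' t = v t - x t)
    (hode3 : ∀ t, 0 ≤ t → γ t • v' t =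
      μβ • (x t - v t) -
        (gradf (x t) + β • (ContinuousLinearMap.adjoint A) (A (x t) - b)
          + (ContinuousLinearMap.adjoint A) (lam t)))
    (Lβ : EuclideanSpace ℝ (Fin n) → EuclideanSpace ℝ (Fin m) → ℝ)
    (hLβ : ∀ z w, Lβ z w = f z + β / 2 * ‖A z - b‖ ^ 2 + ⟪w, A z - b⟫)
    (Efun : ℝ → ℝ)
    (hE : ∀ t, Efun t = Lβ (x t) ls - Lβ xs (lam t)
      + γ t / 2 * ‖v t - xs‖ ^ 2 + θ t / 2 * ‖lam t - ls‖ ^ 2)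
    (R₀ : ℝ)
    (hR₀ : R₀ = Real.sqrt (2 * θ₀ * Efun 0) + θ₀ * ‖lam 0 - ls‖ + ‖A (x 0) - b‖) :
    ∀ t, 0 ≤ t →
      ‖A (x t) - b‖ ≤ Real.exp (-t) * R₀ ∧
      |f (x t) - f xs| ≤ Real.exp (-t) * (Efun 0 + R₀ * ‖ls‖) :=
  apd_flow_feasibility_objective_decay_general f gradf A b μ L β θ₀ γ₀ μβ hμ hβ hθ₀ hγ₀ hμβ hgrad
    hconv xs ls hKKT1 hKKT2 lam x v lam' x' v' hlamd hxd hvd θ γ hθ hγ hode1 hode2 hode3 Lβ hLβ Efun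
    hE R₀ hR₀
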